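/- Let d_L^min be defined by Eq. (2): d_L^min = max(0, (2πR_L/N)(k_v/(k_v−1)) − πR_T/2 − R_L) with k_v = V_max/V_min > 1. Then for every d_L ≥ d_L^min with the unclipped expression nonnegative, and for every initial slot configuration, the arrival-time window [D_L/V_max, D_L/V_min] (with D_L = πR_T/2 + d_L + R_L) has length at least the inter-slot period 2πR_L/(N V_min), so at least one slot arrival time lies in the window; i.e., direct-or-hop insertion is always feasible. -/
import Mathlib


open Real

theorem stmt_19 (N : ℕ) (hN : 1 ≤ N) (RL RT dL Vmin Vmax kv DL : ℝ)
    (hRL : 0 < RL) (hRT : 0 < RT)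
    (hVmin : 0 < Vmin) (hV : Vmin < Vmax)
    (hkv : kv = Vmax / Vmin)
    (hpos : 0 ≤ (2 * π * RL / N) * (kv / (kv - 1)) - π * RT / 2 - RL)
    (hdL : (2 * π * RL / N) * (kv / (kv - 1)) - π * RT / 2 - RL ≤ dL)
    (hDL : DL = π * RT / 2 + dL + RL) :
    2 * π * RL / (N * Vmin) ≤ DL / Vmin - DL / Vmax ∧
    ∀ t0 : ℝ, ∃ m : ℤ,
      t0 + (m : ℝ) * (2 * π * RL / (N * Vmin)) ∈ Set.Icc (DL / Vmax) (DL / Vmin) := by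
  have hN' : (0 : ℝ) < N := by exact_mod_cast Nat.lt_of_lt_of_le Nat.zero_lt_one hN
  have hVmax : 0 < Vmax := hVmin.trans hV
  have hVV : 0 < Vmax - Vmin := by linarith
  have hkv1 : kv - 1 > 0 := by
    rw [hkv]
    have : (1:ℝ) < Vmax / Vmin := (one_lt_div hVmin).mpr hV
    linarith
  -- kv/(kv-1) = Vmax/(Vmax - Vmin)
  have hfrac : kv / (kv - 1) = Vmax / (Vmax - Vmin) := by
    rw [hkv]
    field_simp
  have hDLge : 2 * π * RL / N * (Vmax / (Vmax - Vmin)) ≤ DL := by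
    rw [hDL, ← hfrac]; linarith
  have hT : 2 * π * RL / (N * Vmin) ≤ DL / Vmin - DL / Vmax := by
    have hkey : 2 * π * RL / N * Vmax ≤ DL * (Vmax - Vmin) := by
      have h := mul_le_mul_of_nonneg_right hDLge (le_of_lt hVV)
      calc 2 * π * RL / N * Vmax
          = 2 * π * RL / N * (Vmax / (Vmax - Vmin)) * (Vmax - Vmin) := by
            field_simp
        _ ≤ DL * (Vmax - Vmin) := h
    have hkey2 : 2 * π * RL * Vmax ≤ DL * (Vmax - Vmin) * N := by
      rw [div_mul_eq_mul_div, div_le_iff₀ hN'] at hkey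
      linarith
    rw [div_sub_div _ _ (ne_of_gt hVmin) (ne_of_gt hVmax),
      div_le_div_iff₀ (by positivity) (by positivity)]
    nlinarith [mul_le_mul_of_nonneg_right hkey2 hVmin.le]
  refine ⟨hT, fun t0 => ?_⟩
  set T := 2 * π * RL / (N * Vmin) with hTdef
  have hTpos : 0 < T := by
    have := Real.pi_pos
    positivity
  refine ⟨⌈(DL / Vmax - t0) / T⌉, ?_, ?_⟩
  · have h := Int.le_ceil ((DL / Vmax - t0) / T)
    have : DL / Vmax - t0 ≤ (⌈(DL / Vmax - t0) / T⌉ : ℝ) * T := by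
      rw [← div_le_iff₀ hTpos] at *
      exact h
    linarith
  · have h := Int.ceil_lt_add_one ((DL / Vmax - t0) / T)
    have h2 : (⌈(DL / Vmax - t0) / T⌉ : ℝ) * T < DL / Vmax - t0 + T := by
      have := (mul_lt_mul_of_pos_right h hTpos)
      calc (⌈(DL / Vmax - t0) / T⌉ : ℝ) * T < ((DL / Vmax - t0) / T + 1) * T := this
        _ = DL / Vmax - t0 + T := by field_simp
    have : DL / Vmax + T ≤ DL / Vmin := by linarith [hT]
    linarith
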